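/- arXiv:2501.05384 — 5 statements merged into one kernel-verified Lean document; each statement's English description precedes it below -/
import Mathlib

section
/- There exists an infinite integer payoff sequence ρ such that ρ does not satisfy BWMP(0) (for every L ≥ 1, ρ does not satisfy FWMP(L, 0)), yet for every ε > 0 there exists L ≥ 1 such that ρ satisfies FWMP(L, -ε); hence the BWMP-value of ρ equals 0 while ρ ∉ BWMP(0). -/
def FWMP (w : ℕ → ℤ) (L : ℕ) (lam : ℝ) : Prop :=
  ∃ k : ℕ, ∀ i ≥ k, ∃ j : ℕ, 1 ≤ j ∧ j ≤ L ∧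
    (∑ m ∈ Finset.Ico i (i + j), (w m : ℝ)) / (j : ℝ) ≥ lam

noncomputable def FWMPvalue (w : ℕ → ℤ) (L : ℕ) : ℝ := sSup {lam : ℝ | FWMP w L lam}

def BWMP (w : ℕ → ℤ) (lam : ℝ) : Prop := ∃ L : ℕ, 1 ≤ L ∧ FWMP w L lam

noncomputable def BWMPvalue (w : ℕ → ℤ) : ℝ := sSup {lam : ℝ | BWMP w lam}

/-!
Take ρ with ρ n = -1 when n is a power of two and ρ n = 0 otherwise. Every window starting at
a power of two has negative sum, and powers of two occur beyond every k, so no FWMP(L, 0) holds.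
But a window [i, i + L) with L ≤ i contains at most one power of two, so its average is at least
-1/L, which gives FWMP(L, -1/L).
-/

open Finset

section Threshold

variable {w : ℕ → ℤ} {L : ℕ} {lam mu : ℝ}

theorem FWMP.mono (h : FWMP w L lam) (hmu : mu ≤ lam) : FWMP w L mu := by
  obtain ⟨k, hk⟩ := h
  refine ⟨k, fun i hi => ?_⟩
  obtain ⟨j, hj1, hjL, havg⟩ := hk i hi
  exact ⟨j, hj1, hjL, hmu.trans havg⟩

theorem setOf_BWMP_eq_Iio (hnot : ¬ BWMP w lam) (hlt : ∀ mu < lam, BWMP w mu) :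
    {mu | BWMP w mu} = Set.Iio lam := by
  ext mu
  exact ⟨fun ⟨L, hL, h⟩ => not_le.1 fun hle => hnot ⟨L, hL, h.mono hle⟩, hlt mu⟩

theorem BWMPvalue_eq_of_not_BWMP (hnot : ¬ BWMP w lam) (hlt : ∀ mu < lam, BWMP w mu) :
    BWMPvalue w = lam := by
  rw [BWMPvalue, setOf_BWMP_eq_Iio hnot hlt, csSup_Iio]

end Threshold

theorem eq_of_two_pow_mem_Ico {i a b : ℕ} (ha : 2 ^ a ∈ Ico i (2 * i)) (hb : 2 ^ b ∈ Ico i (2 * i)) :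
    a = b := by
  have key : ∀ {c d : ℕ}, 2 ^ c ∈ Ico i (2 * i) → 2 ^ d ∈ Ico i (2 * i) → c ≤ d := by
    intro c d hc hd
    rw [mem_Ico] at hc hd
    have : 2 ^ c < 2 ^ (d + 1) := by rw [pow_succ]; omega
    exact Nat.lt_succ_iff.1 ((Nat.pow_lt_pow_iff_right (by norm_num)).1 this)
  exact le_antisymm (key ha hb) (key hb ha)

open Classical in
noncomputable def negOnPowTwo (n : ℕ) : ℤ := if ∃ a, n = 2 ^ a then -1 else 0

namespace negOnPowTwo

open Classical in
theorem sum_eq_neg_card (s : Finset ℕ) :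
    ∑ m ∈ s, (negOnPowTwo m : ℝ) = -#(s.filter fun m => ∃ a, m = 2 ^ a) := by
  simp only [negOnPowTwo, apply_ite (Int.cast : ℤ → ℝ), Int.cast_neg, Int.cast_one, Int.cast_zero]
  rw [← sum_filter, sum_const, nsmul_eq_mul, mul_neg_one]

theorem sum_Ico_two_pow_le {k j : ℕ} (hj : 1 ≤ j) :
    ∑ m ∈ Ico (2 ^ k) (2 ^ k + j), (negOnPowTwo m : ℝ) ≤ -1 := by
  classical
  have hmem : 2 ^ k ∈ (Ico (2 ^ k) (2 ^ k + j)).filter fun m => ∃ a, m = 2 ^ a :=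
    mem_filter.2 ⟨mem_Ico.2 ⟨le_rfl, by omega⟩, k, rfl⟩
  have hcard : (1 : ℝ) ≤ #((Ico (2 ^ k) (2 ^ k + j)).filter fun m => ∃ a, m = 2 ^ a) := by
    exact_mod_cast card_pos.2 ⟨_, hmem⟩
  rw [sum_eq_neg_card]
  linarith

theorem neg_one_le_sum_Ico {i L : ℕ} (hL : L ≤ i) :
    -1 ≤ ∑ m ∈ Ico i (i + L), (negOnPowTwo m : ℝ) := by
  classical
  have hcard : #((Ico i (i + L)).filter fun m => ∃ a, m = 2 ^ a) ≤ 1 := by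
    refine card_le_one.2 fun x hx y hy => ?_
    obtain ⟨hx, a, rfl⟩ := mem_filter.1 hx
    obtain ⟨hy, b, rfl⟩ := mem_filter.1 hy
    have hsub : Ico i (i + L) ⊆ Ico i (2 * i) := Ico_subset_Ico_right (by omega)
    rw [eq_of_two_pow_mem_Ico (hsub hx) (hsub hy)]
  rw [sum_eq_neg_card, neg_le_neg_iff]
  exact_mod_cast hcard

theorem not_FWMP_zero (L : ℕ) : ¬ FWMP negOnPowTwo L 0 := by
  rintro ⟨k, hk⟩
  obtain ⟨j, hj1, -, havg⟩ := hk (2 ^ k) Nat.lt_two_pow_self.le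
  have hj : (0 : ℝ) < j := by exact_mod_cast hj1
  have := div_neg_of_neg_of_pos ((sum_Ico_two_pow_le (k := k) hj1).trans_lt (by norm_num)) hj
  linarith

theorem FWMP_neg_inv {L : ℕ} (hL : 1 ≤ L) : FWMP negOnPowTwo L (-1 / L) :=
  ⟨L, fun i hi => ⟨L, hL, le_rfl, div_le_div_of_nonneg_right (neg_one_le_sum_Ico hi) (by positivity)⟩⟩

theorem BWMP_neg {ε : ℝ} (hε : 0 < ε) : BWMP negOnPowTwo (-ε) := by
  obtain ⟨n, hn⟩ := exists_nat_one_div_lt hε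
  refine ⟨n + 1, by omega, (FWMP_neg_inv (by omega)).mono ?_⟩
  rw [neg_div, neg_le_neg_iff]
  exact_mod_cast hn.le

end negOnPowTwo

theorem stmt4 :
    ∃ ρ : ℕ → ℤ,
      (∀ L : ℕ, 1 ≤ L → ¬ FWMP ρ L 0) ∧
      (∀ ε : ℝ, 0 < ε → ∃ L : ℕ, 1 ≤ L ∧ FWMP ρ L (-ε)) ∧
      BWMPvalue ρ = 0 ∧ ¬ BWMP ρ 0 := by
  have hnot : ¬ BWMP negOnPowTwo 0 := fun ⟨L, _, h⟩ => negOnPowTwo.not_FWMP_zero L h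
  have hlt : ∀ mu < 0, BWMP negOnPowTwo mu := fun mu hmu =>
    neg_neg mu ▸ negOnPowTwo.BWMP_neg (neg_pos.2 hmu)
  exact ⟨negOnPowTwo, fun L _ => negOnPowTwo.not_FWMP_zero L, fun _ => negOnPowTwo.BWMP_neg,
    BWMPvalue_eq_of_not_BWMP hnot hlt, hnot⟩
end

section
/- For all λ ∈ ℝ, if a run ρ satisfies FWMP(L, λ) for some L ≥ 1, then the liminf mean-payoff value of ρ is at least λ. -/
/-!
Along the run, the potential `g n = (∑ k < n, w k) - λ n` does not decrease across any window
promised by `FWMP w L λ` from position `k` on. Chaining windows, every `n ≥ k` lies within `L`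
steps after a position `i` with `g k ≤ g i`, and `g` drops by at most `W + |λ|` per step, so
`g` is bounded below from `k` on. Hence the mean payoff is at least `λ - C / n` for a constant
`C`, and its liminf is at least `λ`.
-/

open Filter Finset Topology

theorem exists_le_apply_of_forall_exists_window {α : Type*} [Preorder α] {g : ℕ → α} {k L : ℕ}
    (hg : ∀ i ≥ k, ∃ j, 1 ≤ j ∧ j ≤ L ∧ g i ≤ g (i + j)) :
    ∀ n ≥ k, ∃ i, k ≤ i ∧ i ≤ n ∧ n ≤ i + L ∧ g k ≤ g i := by
  intro n hn
  induction n, hn using Nat.le_induction with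
  | base => exact ⟨k, le_rfl, le_rfl, Nat.le_add_right k L, le_rfl⟩
  | succ n hkn ih =>
    obtain ⟨i, hki, hin, hni, hgi⟩ := ih
    by_cases hL : n + 1 ≤ i + L
    · exact ⟨i, hki, by omega, hL, hgi⟩
    · obtain ⟨j, hj1, hjL, hgj⟩ := hg i hki
      exact ⟨i + j, by omega, by omega, by omega, hgi.trans hgj⟩

theorem sub_mul_le_apply_add {g : ℕ → ℝ} {D : ℝ} (hstep : ∀ m, g m - D ≤ g (m + 1))
    (i d : ℕ) : g i - d * D ≤ g (i + d) := by
  induction d with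
  | zero => simp
  | succ d ih =>
    rw [← add_assoc]
    push_cast
    linarith [hstep (i + d)]

theorem sub_mul_le_of_forall_exists_window {g : ℕ → ℝ} {k L : ℕ} {D : ℝ} (hD : 0 ≤ D)
    (hg : ∀ i ≥ k, ∃ j, 1 ≤ j ∧ j ≤ L ∧ g i ≤ g (i + j))
    (hstep : ∀ m, g m - D ≤ g (m + 1)) :
    ∀ n ≥ k, g k - L * D ≤ g n := by
  intro n hn
  obtain ⟨i, -, hin, hni, hgi⟩ := exists_le_apply_of_forall_exists_window hg n hn
  obtain ⟨d, rfl⟩ := Nat.exists_eq_add_of_le hin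
  have hdL : (d : ℝ) * D ≤ L * D := by gcongr; exact_mod_cast (by omega : d ≤ L)
  linarith [sub_mul_le_apply_add hstep i d]

theorem le_liminf_div_of_eventually_sub_le {S : ℕ → ℝ} {B lam C : ℝ}
    (hub : ∀ n, S n ≤ n * B) (hlow : ∀ᶠ n in atTop, lam * n - C ≤ S n) :
    lam ≤ liminf (fun n : ℕ => S n / n) atTop := by
  have hlim : Tendsto (fun n : ℕ => lam - C / n) atTop (𝓝 lam) := by
    simpa using tendsto_const_nhds.sub (tendsto_const_div_atTop_nhds_zero_nat C)
  have hcobdd : IsCoboundedUnder (· ≥ ·) atTop (fun n : ℕ => S n / n) := by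
    refine (isBoundedUnder_of_eventually_le (a := B) ?_).isCoboundedUnder_ge
    filter_upwards [eventually_gt_atTop 0] with n hn
    rw [div_le_iff₀ (by positivity), mul_comm]
    exact hub n
  rw [← hlim.liminf_eq]
  refine liminf_le_liminf ?_ hlim.isBoundedUnder_ge hcobdd
  filter_upwards [hlow, eventually_gt_atTop 0] with n hn hn0
  rw [le_div_iff₀ (by positivity), sub_mul, div_mul_cancel₀ _ (by positivity)]
  linarith

theorem stmt6_general (w : ℕ → ℤ) (W : ℤ) (hW : ∀ k, |w k| ≤ W) (lam : ℝ)
    (L : ℕ) (h : FWMP w L lam) :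
    Filter.liminf (fun n : ℕ => (∑ k ∈ Finset.range n, (w k : ℝ)) / (n : ℝ))
      Filter.atTop ≥ lam := by
  obtain ⟨k, hk⟩ := h
  set S : ℕ → ℝ := fun n => ∑ m ∈ range n, (w m : ℝ) with hS
  have hWr : ∀ m, |(w m : ℝ)| ≤ W := fun m => by exact_mod_cast hW m
  have hwin : ∀ i ≥ k, ∃ j, 1 ≤ j ∧ j ≤ L ∧ S i - lam * i ≤ S (i + j) - lam * ↑(i + j) := by
    intro i hi
    obtain ⟨j, hj1, hjL, hj⟩ := hk i hi
    refine ⟨j, hj1, hjL, ?_⟩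
    rw [ge_iff_le, le_div_iff₀ (by positivity), sum_Ico_eq_sub _ (by omega)] at hj
    push_cast
    linarith
  have hstep : ∀ m, (S m - lam * m) - (W + |lam|) ≤ S (m + 1) - lam * ↑(m + 1) := by
    intro m
    simp only [hS, sum_range_succ]
    push_cast
    linarith [neg_le_of_abs_le (hWr m), le_abs_self lam]
  have hlow := sub_mul_le_of_forall_exists_window
    (by linarith [(abs_nonneg _).trans (hWr 0), abs_nonneg lam]) hwin hstep
  refine le_liminf_div_of_eventually_sub_le (B := W) (C := L * (W + |lam|) - (S k - lam * k))
    (fun n => ?_) ?_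
  · simpa [hS, mul_comm] using sum_le_card_nsmul (range n) _ _ fun m _ => (abs_le.1 (hWr m)).2
  · filter_upwards [eventually_ge_atTop k] with n hn
    linarith [hlow n hn]

theorem stmt6 (w : ℕ → ℤ) (W : ℤ) (hW : ∀ k, |w k| ≤ W) (lam : ℝ)
    (L : ℕ) (hL : 1 ≤ L) (h : FWMP w L lam) :
    Filter.liminf (fun n : ℕ => (∑ k ∈ Finset.range n, (w k : ℝ)) / (n : ℝ))
      Filter.atTop ≥ lam :=
  stmt6_general w W hW lam L h
end

section
/- The payoff sequence (−1)(+1)(−1)(−1)(+1)(+1)(−1)(−1)(−1)(+1)(+1)(+1)… (where the block for n ≥ 1 consists of n payoffs of −1 followed by n payoffs of +1) has liminf mean-payoff value at most 0, but for every L ≥ 1 it fails FWMP(L, 0), i.e., it contains arbitrarily late positions from which no window of length at most L has nonnegative mean payoff. -/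
/-!
Every block sums to `0`, so the mean payoff vanishes at the block boundaries `n * (n + 1)`; as
the means are bounded below by `-1`, the liminf is at most `0`. A window of length `j ≤ L`
starting at a block boundary `n * (n + 1)` with `n ≥ L` sees only payoffs `-1`, so its mean is `-1`.
-/

open Finset Filter

lemma exists_le_lt_succ_of_strictMono {f : ℕ → ℕ} (hf : StrictMono f) {k : ℕ} (hk : f 0 ≤ k) :
    ∃ n, f n ≤ k ∧ k < f (n + 1) := by
  induction k, hk using Nat.le_induction with
  | base => exact ⟨0, le_rfl, hf (Nat.lt_succ_self 0)⟩
  | succ k _ ih =>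
    obtain ⟨n, hnk, hkn⟩ := ih
    rcases (Nat.succ_le_of_lt hkn).lt_or_eq with hlt | heq
    · exact ⟨n, by omega, hlt⟩
    · exact ⟨n + 1, heq.ge, heq.trans_lt (hf (Nat.lt_succ_self _))⟩

lemma strictMono_mul_succ : StrictMono fun n : ℕ => n * (n + 1) :=
  strictMono_nat_of_lt_succ fun n => by nlinarith

def IsStaircase (w : ℕ → ℤ) : Prop :=
  ∀ n : ℕ, 1 ≤ n → ∀ j < n, w ((n - 1) * n + j) = -1 ∧ w ((n - 1) * n + n + j) = 1

namespace IsStaircase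

variable {w : ℕ → ℤ} (hw : IsStaircase w)
include hw

lemma apply_neg {n j : ℕ} (hj : j ≤ n) : w (n * (n + 1) + j) = -1 := by
  simpa using (hw (n + 1) n.succ_pos j (Nat.lt_succ_of_le hj)).1

lemma apply_pos {n j : ℕ} (hj : j ≤ n) : w (n * (n + 1) + (n + 1) + j) = 1 := by
  simpa using (hw (n + 1) n.succ_pos j (Nat.lt_succ_of_le hj)).2

lemma apply_eq_neg_one_or_one (k : ℕ) : w k = -1 ∨ w k = 1 := by
  obtain ⟨n, hnk, hkn⟩ := exists_le_lt_succ_of_strictMono strictMono_mul_succ (Nat.zero_le k)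
  obtain ⟨j, rfl⟩ := Nat.exists_eq_add_of_le hnk
  by_cases hj : j ≤ n
  · exact Or.inl (hw.apply_neg hj)
  · right
    obtain ⟨i, rfl⟩ := Nat.exists_eq_add_of_le (Nat.succ_le_of_lt (not_le.mp hj))
    rw [← add_assoc]
    exact hw.apply_pos (by nlinarith)

lemma sum_range_mul_succ (n : ℕ) : ∑ k ∈ range (n * (n + 1)), (w k : ℝ) = 0 := by
  induction n with
  | zero => simp
  | succ n ih =>
    rw [show (n + 1) * (n + 1 + 1) = n * (n + 1) + (n + 1) + (n + 1) by ring,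
      sum_range_add, sum_range_add, ih,
      sum_congr rfl fun j hj =>
        congrArg (Int.cast (R := ℝ)) (hw.apply_neg (mem_range_succ_iff.mp hj)),
      sum_congr rfl fun j hj =>
        congrArg (Int.cast (R := ℝ)) (hw.apply_pos (mem_range_succ_iff.mp hj))]
    simp

lemma sum_Ico_block_start {n j : ℕ} (hj : j ≤ n + 1) :
    ∑ m ∈ Ico (n * (n + 1)) (n * (n + 1) + j), (w m : ℝ) = -j := by
  rw [sum_Ico_eq_sum_range, Nat.add_sub_cancel_left,
    sum_congr rfl fun i hi => congrArg (Int.cast (R := ℝ)) (hw.apply_neg (by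
      have := mem_range.mp hi; omega))]
  simp

lemma neg_one_le_mean (N : ℕ) : -1 ≤ (∑ k ∈ range N, (w k : ℝ)) / N := by
  rcases N.eq_zero_or_pos with rfl | hN
  · simp
  rw [le_div_iff₀ (by exact_mod_cast hN)]
  calc -1 * (N : ℝ) = ∑ _k ∈ range N, (-1 : ℝ) := by simp
    _ ≤ ∑ k ∈ range N, (w k : ℝ) := sum_le_sum fun k _ => by
        rcases hw.apply_eq_neg_one_or_one k with h | h <;> simp [h]

lemma liminf_mean_le_zero :
    liminf (fun N : ℕ => (∑ k ∈ range N, (w k : ℝ)) / N) atTop ≤ 0 := by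
  refine liminf_le_of_frequently_le ?_ (isBoundedUnder_of ⟨-1, hw.neg_one_le_mean⟩)
  refine frequently_atTop.2 fun a => ⟨a * (a + 1), Nat.le_mul_of_pos_right a a.succ_pos, ?_⟩
  simp [hw.sum_range_mul_succ]

lemma not_fwmp_zero (L : ℕ) : ¬ FWMP w L 0 := by
  rintro ⟨k, hk⟩
  set n := k + L
  have hkn : k ≤ n * (n + 1) :=
    (Nat.le_add_right k L).trans (Nat.le_mul_of_pos_right n n.succ_pos)
  obtain ⟨j, hj, hjL, hmean⟩ := hk (n * (n + 1)) hkn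
  rw [hw.sum_Ico_block_start (by omega), neg_div_self (by positivity)] at hmean
  norm_num at hmean

end IsStaircase

theorem stmt12 (w : ℕ → ℤ)
    (hw : ∀ n : ℕ, 1 ≤ n → ∀ j < n,
      w ((n - 1) * n + j) = -1 ∧ w ((n - 1) * n + n + j) = 1) :
    Filter.liminf (fun N : ℕ => (∑ k ∈ Finset.range N, (w k : ℝ)) / (N : ℝ))
        Filter.atTop ≤ 0 ∧
    ∀ L : ℕ, 1 ≤ L → ¬ FWMP w L 0 :=
  ⟨IsStaircase.liminf_mean_le_zero hw, fun L _ => IsStaircase.not_fwmp_zero hw L⟩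
end

section
/- (Inductive window property) If the λ-window starting at position i closes at position j (i.e., j is the least position > i with mean payoff of w(i..j) ≥ λ), then for every intermediate position i < k < j, the λ-window starting at k also closes at or before j. -/
theorem stmt14 (w : ℕ → ℝ) (lam : ℝ) (i j : ℕ) (hij : i < j)
    (hclose : (∑ m ∈ Finset.Ico i j, w m) / ((j : ℝ) - (i : ℝ)) ≥ lam)
    (hopen : ∀ k : ℕ, i < k → k < j →
      (∑ m ∈ Finset.Ico i k, w m) / ((k : ℝ) - (i : ℝ)) < lam) :
    ∀ k : ℕ, i < k → k < j → ∃ j' : ℕ, k < j' ∧ j' ≤ j ∧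
      (∑ m ∈ Finset.Ico k j', w m) / ((j' : ℝ) - (k : ℝ)) ≥ lam := by
  intro k hik hkj
  refine ⟨j, hkj, le_refl j, ?_⟩
  have hji : (0 : ℝ) < (j : ℝ) - i := by
    have : (i : ℝ) < j := by exact_mod_cast hij
    linarith
  have hki : (0 : ℝ) < (k : ℝ) - i := by
    have : (i : ℝ) < k := by exact_mod_cast hik
    linarith
  have hjk : (0 : ℝ) < (j : ℝ) - k := by
    have : (k : ℝ) < j := by exact_mod_cast hkj
    linarith
  have hsplit : (∑ m ∈ Finset.Ico i k, w m) + (∑ m ∈ Finset.Ico k j, w m)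
      = ∑ m ∈ Finset.Ico i j, w m :=
    Finset.sum_Ico_consecutive _ (le_of_lt hik) (le_of_lt hkj)
  have h1 : lam * ((j : ℝ) - i) ≤ ∑ m ∈ Finset.Ico i j, w m := by
    rw [ge_iff_le, le_div_iff₀ hji] at hclose
    linarith
  have h2 : (∑ m ∈ Finset.Ico i k, w m) < lam * ((k : ℝ) - i) := by
    have := hopen k hik hkj
    rw [div_lt_iff₀ hki] at this
    linarith
  rw [ge_iff_le, le_div_iff₀ hjk]
  nlinarith
end

section
/- Assume payoffs are bounded by W in absolute value. If a payoff sequence decomposes from position k₀ onward into consecutive segments each of length between 1 and L with mean payoff at least λ, then the liminf mean payoff of the full sequence is at least λ. -/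
open Filter

theorem stmt16 (w : ℕ → ℝ) (W lam : ℝ) (L k₀ : ℕ) (hL : 1 ≤ L)
    (hW : ∀ m, |w m| ≤ W)
    (idx : ℕ → ℕ) (h0 : idx 0 = k₀) (hmono : StrictMono idx)
    (hlen : ∀ t, idx (t + 1) - idx t ≤ L)
    (hmean : ∀ t, ∑ m ∈ Finset.Ico (idx t) (idx (t + 1)), w m ≥
      lam * ((idx (t + 1) : ℝ) - (idx t : ℝ))) :
    Filter.liminf (fun N : ℕ => (∑ m ∈ Finset.range N, w m) / (N : ℝ))
      Filter.atTop ≥ lam := by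
  have hWpos : 0 ≤ W := le_trans (abs_nonneg _) (hW 0)
  set C : ℝ := (W + |lam|) * ((k₀ : ℝ) + L) with hCdef
  have hle : ∀ n, n ≤ idx n := by
    intro n; induction n with
    | zero => exact Nat.zero_le _
    | succ n ih => exact Nat.succ_le_of_lt (lt_of_le_of_lt ih (hmono (Nat.lt_succ_self n)))
  -- segment lower bound
  have hseg : ∀ a b : ℕ, a ≤ b → -(W * ((b : ℝ) - a)) ≤ ∑ m ∈ Finset.Ico a b, w m := by
    intro a b hab
    have hterm : ∀ m ∈ Finset.Ico a b, -W ≤ w m := fun m _ => (abs_le.mp (hW m)).1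
    calc -(W * ((b : ℝ) - a)) = (Finset.Ico a b).card • (-W) := by
          rw [Nat.card_Ico, nsmul_eq_mul, Nat.cast_sub hab]; ring
      _ ≤ ∑ m ∈ Finset.Ico a b, w m := Finset.card_nsmul_le_sum _ _ _ hterm
  -- telescoping
  have tel : ∀ T, lam * ((idx T : ℝ) - (idx 0 : ℝ)) ≤ ∑ m ∈ Finset.Ico (idx 0) (idx T), w m := by
    intro T; induction T with
    | zero => simp
    | succ T ih =>
      have h1 : idx 0 ≤ idx T := hmono.monotone (Nat.zero_le T)
      have h2 : idx T ≤ idx (T + 1) := le_of_lt (hmono (Nat.lt_succ_self T))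
      rw [← Finset.sum_Ico_consecutive w h1 h2]
      have heq : lam * ((idx (T+1) : ℝ) - idx 0)
          = lam * ((idx T : ℝ) - idx 0) + lam * ((idx (T+1) : ℝ) - idx T) := by ring
      linarith [hmean T]
  -- key inequality
  have key : ∀ N : ℕ, k₀ ≤ N → lam * N - C ≤ ∑ m ∈ Finset.range N, w m := by
    intro N hN
    set T := Nat.findGreatest (fun t => idx t ≤ N) N with hTdef
    have hPT : idx T ≤ N :=
      Nat.findGreatest_spec (P := fun t => idx t ≤ N) (m := 0) (Nat.zero_le N)
        (show idx 0 ≤ N by rw [h0]; exact hN)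
    have hTub : N < idx (T + 1) := by
      rcases lt_or_ge T N with h | h
      · by_contra hcon
        exact Nat.findGreatest_is_greatest (Nat.lt_succ_self T) h (Nat.not_lt.mp hcon)
      · have hTN : T = N := le_antisymm (Nat.findGreatest_le N) h
        rw [hTN]
        exact lt_of_lt_of_le (Nat.lt_succ_self N) (hle (N + 1))
    have hk0T : k₀ ≤ idx T := h0 ▸ hmono.monotone (Nat.zero_le T)
    have hlen' : idx (T + 1) ≤ idx T + L := by
      have := hlen T
      have := le_of_lt (hmono (Nat.lt_succ_self T))
      omega
    have hsplit : ∑ m ∈ Finset.range N, w m =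
        (∑ m ∈ Finset.Ico 0 k₀, w m) + (∑ m ∈ Finset.Ico k₀ (idx T), w m)
          + (∑ m ∈ Finset.Ico (idx T) N, w m) := by
      rw [Finset.range_eq_Ico,
        ← Finset.sum_Ico_consecutive w (Nat.zero_le (idx T)) hPT,
        ← Finset.sum_Ico_consecutive w (Nat.zero_le k₀) hk0T]
    have hA : -(W * (k₀ : ℝ)) ≤ ∑ m ∈ Finset.Ico 0 k₀, w m := by
      have := hseg 0 k₀ (Nat.zero_le _); simpa using this
    have hB : lam * ((idx T : ℝ) - k₀) ≤ ∑ m ∈ Finset.Ico k₀ (idx T), w m := by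
      have := tel T
      rw [h0] at this
      exact this
    have hD : -(W * ((N : ℝ) - idx T)) ≤ ∑ m ∈ Finset.Ico (idx T) N, w m := hseg _ _ hPT
    -- real casts
    have hr1 : (k₀ : ℝ) ≤ idx T := by exact_mod_cast hk0T
    have hr2 : (idx T : ℝ) ≤ N := by exact_mod_cast hPT
    have hr3 : (N : ℝ) ≤ (idx T : ℝ) + L := by
      have : N ≤ idx T + L := le_trans (le_of_lt hTub) hlen'
      exact_mod_cast this
    have hk0r : (0 : ℝ) ≤ k₀ := Nat.cast_nonneg _
    -- bound lam * (idx T - k₀) from below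
    have hx0 : (0 : ℝ) ≤ (N : ℝ) + k₀ - idx T := by linarith
    have hxle : (N : ℝ) + k₀ - idx T ≤ (k₀ : ℝ) + L := by linarith
    have h1 : lam * ((N : ℝ) + k₀ - idx T) ≤ |lam| * ((N : ℝ) + k₀ - idx T) :=
      mul_le_mul_of_nonneg_right (le_abs_self lam) hx0
    have h2 : |lam| * ((N : ℝ) + k₀ - idx T) ≤ |lam| * ((k₀ : ℝ) + L) :=
      mul_le_mul_of_nonneg_left hxle (abs_nonneg _)
    have h3 : W * ((N : ℝ) - idx T) ≤ W * L :=
      mul_le_mul_of_nonneg_left (by linarith) hWpos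
    rw [hsplit, hCdef]
    nlinarith [hA, hB, hD]
  -- limit of the lower-bound sequence
  have hlim : Filter.Tendsto (fun N : ℕ => lam - C / N) Filter.atTop (nhds lam) := by
    have h1 : Filter.Tendsto (fun N : ℕ => C / N) Filter.atTop (nhds 0) :=
      Filter.Tendsto.div_atTop tendsto_const_nhds tendsto_natCast_atTop_atTop
    have := Filter.Tendsto.sub (tendsto_const_nhds (x := lam) (f := Filter.atTop)) h1
    simpa using this
  have hglim : Filter.liminf (fun N : ℕ => lam - C / N) Filter.atTop = lam := hlim.liminf_eq
  rw [ge_iff_le, ← hglim]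
  apply Filter.liminf_le_liminf
  · filter_upwards [Filter.eventually_ge_atTop (max k₀ 1)] with N hN
    have hN1 : 1 ≤ N := le_trans (le_max_right _ _) hN
    have hNk : k₀ ≤ N := le_trans (le_max_left _ _) hN
    have hNpos : (0 : ℝ) < N := by exact_mod_cast hN1
    rw [le_div_iff₀ hNpos, sub_mul, div_mul_cancel₀ _ hNpos.ne']
    exact key N hNk
  · exact hlim.isBoundedUnder_ge
  · have hub : ∀ N : ℕ, (∑ m ∈ Finset.range N, w m) / N ≤ W := by
      intro N
      rcases Nat.eq_zero_or_pos N with h | h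
      · simp [h]; linarith
      · have hNpos : (0 : ℝ) < N := by exact_mod_cast h
        rw [div_le_iff₀ hNpos]
        have hterm : ∀ m ∈ Finset.range N, w m ≤ W := fun m _ => (abs_le.mp (hW m)).2
        calc ∑ m ∈ Finset.range N, w m ≤ (Finset.range N).card • W :=
              Finset.sum_le_card_nsmul _ _ _ hterm
          _ = W * N := by rw [Finset.card_range, nsmul_eq_mul]; ring
    exact (Filter.isBoundedUnder_of ⟨W, fun N => hub N⟩).isCoboundedUnder_ge
end
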